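/- arXiv:1804.08283 — 2 statements merged into one kernel-verified Lean document; each statement's English description precedes it below -/
import Mathlib

section
/- If u : ℝ → ℝ satisfies u'' + u = 0, then the function I₀²(φ) = (u'(φ)² − u(φ)²)·sin(2φ)/2 − u(φ)·u'(φ)·cos(2φ) is constant. -/
open Real

/-- The quantity `I₀²` of the paper, with `v` in the role of `u'`. -/
noncomputable def oscillatorInvariant (u v : ℝ → ℝ) (φ : ℝ) : ℝ :=
  (v φ ^ 2 - u φ ^ 2) * sin (2 * φ) / 2 - u φ * v φ * cos (2 * φ)

theorem hasDerivAt_oscillatorInvariant {u v : ℝ → ℝ} {w φ : ℝ}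
    (hu : HasDerivAt u (v φ) φ) (hv : HasDerivAt v w φ) :
    HasDerivAt (oscillatorInvariant u v)
      ((w + u φ) * (v φ * sin (2 * φ) - u φ * cos (2 * φ))) φ := by
  have h2 : HasDerivAt (fun φ : ℝ => 2 * φ) 2 φ := by
    simpa using (hasDerivAt_id φ).const_mul (2 : ℝ)
  have H := ((((hv.pow 2).sub (hu.pow 2)).mul h2.sin).div_const 2).sub ((hu.mul hv).mul h2.cos)
  refine H.congr_deriv ?_
  simp only [Nat.cast_ofNat, Pi.pow_apply, Pi.sub_apply, Pi.mul_apply]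
  ring

theorem stmt_1 (u : ℝ → ℝ) (hu : Differentiable ℝ u)
    (hu' : Differentiable ℝ (deriv u))
    (hode : ∀ φ : ℝ, deriv (deriv u) φ + u φ = 0) :
    ∀ φ₁ φ₂ : ℝ,
      (deriv u φ₁ ^ 2 - u φ₁ ^ 2) * Real.sin (2 * φ₁) / 2 - u φ₁ * deriv u φ₁ * Real.cos (2 * φ₁)
      = (deriv u φ₂ ^ 2 - u φ₂ ^ 2) * Real.sin (2 * φ₂) / 2 - u φ₂ * deriv u φ₂ * Real.cos (2 * φ₂) := by
  have hderiv (φ : ℝ) : HasDerivAt (oscillatorInvariant u (deriv u)) 0 φ := by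
    simpa [hode φ] using
      hasDerivAt_oscillatorInvariant (hu φ).hasDerivAt (hu' φ).hasDerivAt
  exact is_const_of_deriv_eq_zero (fun φ => (hderiv φ).differentiableAt)
    (fun φ => (hderiv φ).deriv)
end

section
/- If u : ℝ → ℝ satisfies u'' + u = 0, then the function I₀³(φ) = (u'(φ)² − u(φ)²)·cos(2φ)/2 + u(φ)·u'(φ)·sin(2φ) is constant. -/
/-! With `w(φ) = (u'(φ) - i u(φ)) e^{iφ}` the quantity is `Re (w²) / 2`, and `w' = 0` precisely
because `u'' = -u`; equivalently, its real derivative vanishes identically. -/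

open Real

noncomputable section

def doubleAngleInvariant (u v : ℝ → ℝ) (φ : ℝ) : ℝ :=
  (v φ ^ 2 - u φ ^ 2) * cos (2 * φ) / 2 + u φ * v φ * sin (2 * φ)

theorem hasDerivAt_doubleAngleInvariant {u v : ℝ → ℝ} {φ : ℝ}
    (hu : HasDerivAt u (v φ) φ) (hv : HasDerivAt v (-u φ) φ) :
    HasDerivAt (doubleAngleInvariant u v) 0 φ := by
  have hlin : HasDerivAt (fun x : ℝ => 2 * x) 2 φ := by
    simpa using (hasDerivAt_id φ).const_mul 2
  have hcos := (hasDerivAt_cos (2 * φ)).comp φ hlin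
  have hsin := (hasDerivAt_sin (2 * φ)).comp φ hlin
  exact ((((hv.pow 2).sub (hu.pow 2)).mul hcos).div_const 2).add ((hu.mul hv).mul hsin)
    |>.congr_deriv (by
      simp only [Function.comp_apply, Pi.pow_apply, Pi.sub_apply, Pi.mul_apply]
      ring)

theorem doubleAngleInvariant_eq {u v : ℝ → ℝ}
    (hu : ∀ φ, HasDerivAt u (v φ) φ) (hv : ∀ φ, HasDerivAt v (-u φ) φ) (φ₁ φ₂ : ℝ) :
    doubleAngleInvariant u v φ₁ = doubleAngleInvariant u v φ₂ :=
  is_const_of_deriv_eq_zero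
    (fun φ => (hasDerivAt_doubleAngleInvariant (hu φ) (hv φ)).differentiableAt)
    (fun φ => (hasDerivAt_doubleAngleInvariant (hu φ) (hv φ)).deriv) φ₁ φ₂

end

theorem stmt_2 (u : ℝ → ℝ) (hu : Differentiable ℝ u)
    (hu' : Differentiable ℝ (deriv u))
    (hode : ∀ φ : ℝ, deriv (deriv u) φ + u φ = 0) :
    ∀ φ₁ φ₂ : ℝ,
      (deriv u φ₁ ^ 2 - u φ₁ ^ 2) * Real.cos (2 * φ₁) / 2 + u φ₁ * deriv u φ₁ * Real.sin (2 * φ₁)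
      = (deriv u φ₂ ^ 2 - u φ₂ ^ 2) * Real.cos (2 * φ₂) / 2 + u φ₂ * deriv u φ₂ * Real.sin (2 * φ₂) := by
  have hu'' : ∀ φ, HasDerivAt (deriv u) (-u φ) φ := fun φ => by
    rw [← eq_neg_of_add_eq_zero_left (hode φ)]
    exact (hu' φ).hasDerivAt
  exact doubleAngleInvariant_eq (fun φ => (hu φ).hasDerivAt) hu''
end
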